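/- arXiv:1601.03693 — 2 statements merged into one kernel-verified Lean document; each statement's English description precedes it below -/
import Mathlib

section
/- Let (G, G_•) be a filtered group of degree d (i.e. G_{d+1} = {id}). Then every cube q ∈ C^n(G_•) is entirely determined by its restriction to {v ∈ {0,1}^n : |v| ≤ d}, where |v| is the number of coordinates of v equal to 1. -/
open Finset

/-- Embedding of the discrete cube `{0,1}^n` into `ℤ^n`. -/
def cubeEmb {n : ℕ} (v : Fin n → Bool) : Fin n → ℤ := fun i => if v i then 1 else 0

/-- A discrete-cube morphism: the restriction to `{0,1}^m` of an affine
homomorphism `ℤ^m → ℤ^n`. -/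
def IsCubeMorphism {m n : ℕ} (φ : (Fin m → Bool) → (Fin n → Bool)) : Prop :=
  ∃ (M : (Fin m → ℤ) →+ (Fin n → ℤ)) (t : Fin n → ℤ),
    ∀ v : Fin m → Bool, cubeEmb (φ v) = M (cubeEmb v) + t

/-- A face of `{0,1}^n` of codimension `c`: fix `c` coordinates. -/
def IsFaceOfCodim {n : ℕ} (F : Set (Fin n → Bool)) (c : ℕ) : Prop :=
  ∃ (I : Finset (Fin n)) (x : Fin n → Bool), I.card = c ∧
    F = {v : Fin n → Bool | ∀ i ∈ I, v i = x i}

/-- An `m`-face map into `{0,1}^n`: an injective cube morphism whose image is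
an `m`-dimensional face. -/
def IsFaceMap {m n : ℕ} (φ : (Fin m → Bool) → (Fin n → Bool)) : Prop :=
  IsCubeMorphism φ ∧ Function.Injective φ ∧ IsFaceOfCodim (Set.range φ) (n - m)

/-- The number of coordinates of `v` equal to `1`. -/
def weight {n : ℕ} (v : Fin n → Bool) : ℕ := (Finset.univ.filter fun i => v i = true).card

/-- A (pre)filtration on a group: a decreasing chain of subgroups with
`[G_i, G_j] ⊆ G_{i+j}`. -/
def IsGrpPrefiltration {G : Type*} [Group G] (Gf : ℕ → Subgroup G) : Prop :=
  (∀ i, Gf (i + 1) ≤ Gf i) ∧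
  (∀ i j : ℕ, ∀ x ∈ Gf i, ∀ y ∈ Gf j, x⁻¹ * y⁻¹ * x * y ∈ Gf (i + j))

open Classical in
/-- The face-group element `g^F`: equal to `g` on `F` and to the identity elsewhere. -/
noncomputable def faceEl {G : Type*} [Group G] {n : ℕ} (F : Set (Fin n → Bool)) (g : G) :
    (Fin n → Bool) → G :=
  fun v => if v ∈ F then g else 1

/-- The Host–Kra cube group `C^n(G_•)`: the subgroup of `G^{{0,1}^n}` generated by
the face groups. -/
noncomputable def hkCubes {G : Type*} [Group G] (Gf : ℕ → Subgroup G) (n : ℕ) :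
    Subgroup ((Fin n → Bool) → G) :=
  Subgroup.closure { f | ∃ (c : ℕ) (F : Set (Fin n → Bool)) (g : G),
    IsFaceOfCodim F c ∧ g ∈ Gf c ∧ f = faceEl F g }

/-- Restriction of a map on `{0,1}^{n+1}` to the lower face `{v : v_j = 0}`,
viewed as a map on `{0,1}^n`. -/
def lowerFaceRestr {X : Type*} {n : ℕ} (q : (Fin (n + 1) → Bool) → X) (j : Fin (n + 1)) :
    (Fin n → Bool) → X :=
  fun v => q (j.insertNth false v)

/-- An `(n+1)`-corner: every restriction to an `n`-face containing `0^{n+1}` is a cube. -/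
def IsNSCorner {X : Type*} (C : ∀ n, ((Fin n → Bool) → X) → Prop) (n : ℕ)
    (q' : (Fin (n + 1) → Bool) → X) : Prop :=
  ∀ j : Fin (n + 1), C n (lowerFaceRestr q' j)

/-- `q` is a completion of the corner `q'`. -/
def IsNSCompletion {X : Type*} (C : ∀ n, ((Fin n → Bool) → X) → Prop) (n : ℕ)
    (q' q : (Fin (n + 1) → Bool) → X) : Prop :=
  C (n + 1) q ∧ ∀ v : Fin (n + 1) → Bool, v ≠ (fun _ => true) → q v = q' v

/-- The nilspace axioms: composition, ergodicity and corner completion. -/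
def IsNilspace {X : Type*} (C : ∀ n, ((Fin n → Bool) → X) → Prop) : Prop :=
  (∀ (m n : ℕ) (φ : (Fin m → Bool) → (Fin n → Bool)), IsCubeMorphism φ →
      ∀ q, C n q → C m (q ∘ φ)) ∧
  (∀ q : (Fin 1 → Bool) → X, C 1 q) ∧
  (∀ n (q' : (Fin (n + 1) → Bool) → X), IsNSCorner C n q' → ∃ q, IsNSCompletion C n q' q)

/-- A `k`-step nilspace: a nilspace in which every `(k+1)`-corner has a unique
completion. -/
def IsKStepNilspace {X : Type*} (C : ∀ n, ((Fin n → Bool) → X) → Prop) (k : ℕ) : Prop :=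
  IsNilspace C ∧
  ∀ q' : (Fin (k + 1) → Bool) → X, IsNSCorner C k q' → ∃! q, IsNSCompletion C k q' q

/-- The Gray-code alternating product `σ_n`. -/
def graySigma {G : Type*} [Group G] : (n : ℕ) → ((Fin n → Bool) → G) → G
  | 0, g => g (fun i => i.elim0)
  | n + 1, g => (graySigma n (fun v => g (Fin.snoc v true)))⁻¹ *
      graySigma n (fun v => g (Fin.snoc v false))

/-- The difference operator `∂_h g (x) = g(x)⁻¹ g(xh)`. -/
def mulDiff {H G : Type*} [Group H] [Group G] (h : H) (g : H → G) : H → G :=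
  fun x => (g x)⁻¹ * g (x * h)

/-- `g : H → G` is a polynomial map adapted to the filtrations `H_•, G_•`. -/
def IsPolyMap {H G : Type*} [Group H] [Group G] (Hf : ℕ → Subgroup H)
    (Gf : ℕ → Subgroup G) (g : H → G) : Prop :=
  ∀ (n : ℕ) (d : Fin n → ℕ) (h : Fin n → H), (∀ j, h j ∈ Hf (d j)) →
    ∀ x : H, ((List.ofFn h).foldr mulDiff g) x ∈ Gf (∑ j, d j)

/-- The `k`-arrow `⟨q_0, q_1⟩_k : {0,1}^{n+k} → X`. -/
def arrowMap {X : Type*} {n k : ℕ} (q0 q1 : (Fin n → Bool) → X) :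
    (Fin (n + k) → Bool) → X :=
  fun v =>
    if ∀ j : Fin k, v (Fin.natAdd n j) = true
    then q1 (fun i => v (Fin.castAdd k i))
    else q0 (fun i => v (Fin.castAdd k i))

/-!
Induction on `n`. The restrictions of `q` and `q'` to the lower faces `{v | v j = 0}` are cubes of
dimension `n - 1` that agree on vertices of weight `≤ d`, so `q` and `q'` agree away from the top
vertex `1ⁿ`. Then `q q'⁻¹` is a cube that is trivial away from `1ⁿ`, and such a cube takes a value
in `G_n` at `1ⁿ`. This also goes by induction on `n`: the restrictions `r₀, r₁` of a cube
`r ∈ C^{n+1}(G_•)` to two opposite faces satisfy `r₀⁻¹ r₁ ∈ C^n(G_{•+1})`, which is a subgroup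
because `C^n(G_•)` normalises `C^n(G_{•+1})` by the commutator condition `[G_i, G_j] ⊆ G_{i+j}`.
If `n > d`, then `G_n ≤ G_{d+1} = 1`; otherwise `1ⁿ` itself has weight `n ≤ d`.
-/

section Faces

variable {n : ℕ}

lemma card_eq_ite_add_card_filter_succAbove (I : Finset (Fin (n + 1))) (j : Fin (n + 1)) :
    #I = (if j ∈ I then 1 else 0) + #{k | j.succAbove k ∈ I} := by
  rw [card_filter, ← Fin.sum_univ_succAbove (fun i => if i ∈ I then 1 else 0) j, ← card_filter]
  simp

lemma weight_insertNth (j : Fin (n + 1)) (b : Bool) (v : Fin n → Bool) :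
    weight (j.insertNth b v) = (if b then 1 else 0) + weight v := by
  simp only [weight, card_filter, Fin.sum_univ_succAbove _ j, Fin.insertNth_apply_same,
    Fin.insertNth_apply_succAbove]

lemma preimage_insertNth_face (I : Finset (Fin (n + 1))) (x : Fin (n + 1) → Bool)
    (j : Fin (n + 1)) (b : Bool) :
    (fun w => j.insertNth b w) ⁻¹' {v | ∀ i ∈ I, v i = x i} =
      if j ∈ I ∧ x j ≠ b then ∅
      else {w | ∀ k ∈ ({k | j.succAbove k ∈ I} : Finset (Fin n)), w k = x (j.succAbove k)} := by
  ext w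
  simp only [Set.mem_preimage, Set.mem_ofPred_eq, mem_filter, mem_univ, true_and]
  constructor
  · intro h
    split_ifs with hj
    · exact absurd (by simpa using h j hj.1) hj.2.symm
    · intro k hk; simpa using h _ hk
  · intro h i hi
    obtain rfl | ⟨k, rfl⟩ := Fin.eq_self_or_eq_succAbove j i
    · split_ifs at h with hj
      · simp at h
      · simp only [Fin.insertNth_apply_same]; grind
    · split_ifs at h
      · simp at h
      · simpa using h k hi

lemma face_inter_eq_empty_or {F F' : Set (Fin n → Bool)} {c c' : ℕ}
    (hF : IsFaceOfCodim F c) (hF' : IsFaceOfCodim F' c') :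
    F ∩ F' = ∅ ∨ ∃ c'' ≤ c + c', IsFaceOfCodim (F ∩ F') c'' := by
  classical
  obtain ⟨I, x, rfl, rfl⟩ := hF
  obtain ⟨I', x', rfl, rfl⟩ := hF'
  by_cases hcompat : ∀ i ∈ I, i ∈ I' → x i = x' i
  · refine .inr ⟨#(I ∪ I'), card_union_le _ _, I ∪ I', fun i => if i ∈ I then x i else x' i,
      rfl, ?_⟩
    ext v
    simp only [Set.mem_inter_iff, Set.mem_ofPred_eq, mem_union]
    grind
  · push Not at hcompat
    obtain ⟨i, hi, hi', hne⟩ := hcompat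
    exact .inl <| Set.eq_empty_of_forall_notMem fun v ⟨h, h'⟩ =>
      hne ((h i hi).symm.trans (h' i hi'))

lemma apply_eq_of_forall_lowerFaceRestr_eq {X : Type*} {q q' : (Fin (n + 1) → Bool) → X}
    (h : ∀ j, lowerFaceRestr q j = lowerFaceRestr q' j) {v : Fin (n + 1) → Bool}
    (hv : v ≠ fun _ => true) : q v = q' v := by
  obtain ⟨j, hj⟩ : ∃ j, v j = false := by simpa [funext_iff] using hv
  rw [← Fin.insertNth_self_removeNth j v, hj]
  exact congrFun (h j) _

end Faces

section Cubes

variable {G : Type*} [Group G] {Gf : ℕ → Subgroup G} {n : ℕ}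

lemma IsGrpPrefiltration.antitone (hGf : IsGrpPrefiltration Gf) : Antitone Gf :=
  antitone_nat_of_succ_le hGf.1

lemma IsGrpPrefiltration.shift (hGf : IsGrpPrefiltration Gf) :
    IsGrpPrefiltration fun k => Gf (k + 1) :=
  ⟨fun i => hGf.1 (i + 1), fun i j x hx y hy =>
    hGf.antitone (by omega) (hGf.2 (i + 1) (j + 1) x hx y hy)⟩

lemma faceEl_empty (g : G) : faceEl (∅ : Set (Fin n → Bool)) g = 1 := by
  funext v; simp [faceEl]

lemma faceEl_inv (F : Set (Fin n → Bool)) (g : G) : (faceEl F g)⁻¹ = faceEl F g⁻¹ := by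
  funext v; by_cases h : v ∈ F <;> simp [faceEl, h]

lemma faceEl_conj (F F' : Set (Fin n → Bool)) (h g : G) :
    faceEl F h * faceEl F' g * (faceEl F h)⁻¹ =
      faceEl F' g * faceEl (F' ∩ F) (g⁻¹ * h * g * h⁻¹) := by
  funext v
  by_cases hF : v ∈ F <;> by_cases hF' : v ∈ F' <;> simp [faceEl, hF, hF', mul_assoc]

lemma faceEl_mem_hkCubes (hGf : Antitone Gf) {F : Set (Fin n → Bool)} {c k : ℕ}
    (hF : IsFaceOfCodim F c) (hck : c ≤ k) {g : G} (hg : g ∈ Gf k) :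
    faceEl F g ∈ hkCubes Gf n :=
  Subgroup.subset_closure ⟨c, F, g, hF, hGf hck hg, rfl⟩

lemma apply_mem_of_mem_hkCubes (hGf : Antitone Gf) {r : (Fin n → Bool) → G}
    (hr : r ∈ hkCubes Gf n) (v : Fin n → Bool) : r v ∈ Gf 0 := by
  suffices hkCubes Gf n ≤ (Gf 0).comap (Pi.evalMonoidHom (fun _ => G) v) from this hr
  refine (Subgroup.closure_le _).2 ?_
  rintro _ ⟨c, F, g, -, hg, rfl⟩
  by_cases hv : v ∈ F <;> simp [faceEl, hv, hGf (Nat.zero_le c) hg]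

variable (G) in
def faceRestrHom (j : Fin (n + 1)) (b : Bool) :
    ((Fin (n + 1) → Bool) → G) →* ((Fin n → Bool) → G) where
  toFun r w := r (j.insertNth b w)
  map_one' := rfl
  map_mul' _ _ := rfl

lemma faceRestrHom_faceEl (j : Fin (n + 1)) (b : Bool) (F : Set (Fin (n + 1) → Bool)) (g : G) :
    faceRestrHom G j b (faceEl F g) = faceEl ((fun w => j.insertNth b w) ⁻¹' F) g :=
  rfl

lemma faceRestrHom_faceEl_face (I : Finset (Fin (n + 1))) (x : Fin (n + 1) → Bool)
    (j : Fin (n + 1)) (b : Bool) (g : G) :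
    faceRestrHom G j b (faceEl {v | ∀ i ∈ I, v i = x i} g) =
      if j ∈ I ∧ x j ≠ b then 1
      else faceEl {w | ∀ k ∈ ({k | j.succAbove k ∈ I} : Finset (Fin n)), w k = x (j.succAbove k)}
        g := by
  rw [faceRestrHom_faceEl, preimage_insertNth_face]
  split_ifs
  · exact faceEl_empty g
  · rfl

lemma faceRestrHom_mem_hkCubes (hGf : Antitone Gf) (j : Fin (n + 1)) (b : Bool)
    {r : (Fin (n + 1) → Bool) → G} (hr : r ∈ hkCubes Gf (n + 1)) :
    faceRestrHom G j b r ∈ hkCubes Gf n := by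
  suffices hkCubes Gf (n + 1) ≤ (hkCubes Gf n).comap (faceRestrHom G j b) from this hr
  refine (Subgroup.closure_le _).2 ?_
  rintro _ ⟨_, _, g, ⟨I, x, rfl, rfl⟩, hg, rfl⟩
  rw [SetLike.mem_coe, Subgroup.mem_comap, faceRestrHom_faceEl_face]
  split_ifs
  · exact one_mem _
  · exact faceEl_mem_hkCubes hGf ⟨_, _, rfl, rfl⟩
      (by rw [card_eq_ite_add_card_filter_succAbove I j]; omega) hg

lemma faceEl_conj_mem_hkCubes_shift (hGf : IsGrpPrefiltration Gf) {F : Set (Fin n → Bool)}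
    {c : ℕ} (hF : IsFaceOfCodim F c) {h : G} (hh : h ∈ Gf c) {y : (Fin n → Bool) → G}
    (hy : y ∈ hkCubes (fun k => Gf (k + 1)) n) :
    faceEl F h * y * (faceEl F h)⁻¹ ∈ hkCubes (fun k => Gf (k + 1)) n := by
  suffices hkCubes (fun k => Gf (k + 1)) n ≤
      (hkCubes (fun k => Gf (k + 1)) n).comap (MulAut.conj (faceEl F h)).toMonoidHom from this hy
  refine (Subgroup.closure_le _).2 ?_
  rintro _ ⟨c', F', g, hF', hg, rfl⟩
  simp only [SetLike.mem_coe, Subgroup.mem_comap, MulEquiv.coe_toMonoidHom, MulAut.conj_apply,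
    faceEl_conj]
  refine mul_mem (faceEl_mem_hkCubes hGf.shift.antitone hF' le_rfl hg) ?_
  have hcomm : g⁻¹ * h * g * h⁻¹ ∈ Gf (c' + c + 1) := by
    simpa [add_right_comm] using hGf.2 _ _ g hg h⁻¹ (inv_mem hh)
  rcases face_inter_eq_empty_or hF' hF with hempty | ⟨c'', hc'', hF''⟩
  · rw [hempty, faceEl_empty]
    exact one_mem _
  · exact faceEl_mem_hkCubes hGf.shift.antitone hF'' hc'' hcomm

lemma conj_mem_hkCubes_shift (hGf : IsGrpPrefiltration Gf) {a : (Fin n → Bool) → G}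
    (ha : a ∈ hkCubes Gf n) {y : (Fin n → Bool) → G}
    (hy : y ∈ hkCubes (fun k => Gf (k + 1)) n) :
    a * y * a⁻¹ ∈ hkCubes (fun k => Gf (k + 1)) n := by
  induction ha using Subgroup.closure_induction'' generalizing y with
  | mem f hf =>
    obtain ⟨c, F, h, hF, hh, rfl⟩ := hf
    exact faceEl_conj_mem_hkCubes_shift hGf hF hh hy
  | inv_mem f hf =>
    obtain ⟨c, F, h, hF, hh, rfl⟩ := hf
    rw [faceEl_inv]
    exact faceEl_conj_mem_hkCubes_shift hGf hF (inv_mem hh) hy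
  | one => simpa using hy
  | mul a b _ _ iha ihb => simpa only [mul_inv_rev, mul_assoc] using iha (ihb hy)

lemma faceRestrHom_inv_mul_faceEl_mem_hkCubes_shift (hGf : Antitone Gf)
    (I : Finset (Fin (n + 1))) (x : Fin (n + 1) → Bool) (j : Fin (n + 1)) {g : G}
    (hg : g ∈ Gf #I) :
    (faceRestrHom G j false (faceEl {v | ∀ i ∈ I, v i = x i} g))⁻¹ *
      faceRestrHom G j true (faceEl {v | ∀ i ∈ I, v i = x i} g) ∈
        hkCubes (fun k => Gf (k + 1)) n := by
  obtain ⟨F', hF', hrestr⟩ : ∃ F', IsFaceOfCodim F' #({k | j.succAbove k ∈ I} : Finset (Fin n)) ∧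
      ∀ b, faceRestrHom G j b (faceEl {v | ∀ i ∈ I, v i = x i} g) =
        if j ∈ I ∧ x j ≠ b then 1 else faceEl F' g :=
    ⟨_, ⟨_, _, rfl, rfl⟩, fun b => faceRestrHom_faceEl_face I x j b g⟩
  have hshift : Antitone fun k => Gf (k + 1) := hGf.comp_monotone fun _ _ => Nat.succ_le_succ
  rw [hrestr, hrestr]
  by_cases hj : j ∈ I
  · have hcodim : #({k | j.succAbove k ∈ I} : Finset (Fin n)) + 1 ≤ #I := by
      simp [card_eq_ite_add_card_filter_succAbove I j, hj, add_comm]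
    cases x j <;> simp [hj, faceEl_inv]
    · exact faceEl_mem_hkCubes hshift hF' le_rfl (hGf hcodim (inv_mem hg))
    · exact faceEl_mem_hkCubes hshift hF' le_rfl (hGf hcodim hg)
  · simp [hj]

lemma faceRestrHom_inv_mul_mem_hkCubes_shift (hGf : IsGrpPrefiltration Gf) (j : Fin (n + 1))
    {r : (Fin (n + 1) → Bool) → G} (hr : r ∈ hkCubes Gf (n + 1)) :
    (faceRestrHom G j false r)⁻¹ * faceRestrHom G j true r ∈ hkCubes (fun k => Gf (k + 1)) n := by
  induction hr using Subgroup.closure_induction with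
  | mem f hf =>
    obtain ⟨_, _, g, ⟨I, x, rfl, rfl⟩, hg, rfl⟩ := hf
    exact faceRestrHom_inv_mul_faceEl_mem_hkCubes_shift hGf.antitone I x j hg
  | one => simp
  | mul a b _ hb iha ihb =>
    set a₀ := faceRestrHom G j false a
    set a₁ := faceRestrHom G j true a
    set b₀ := faceRestrHom G j false b
    set b₁ := faceRestrHom G j true b
    have hb₀ : b₀⁻¹ ∈ hkCubes Gf n := inv_mem (faceRestrHom_mem_hkCubes hGf.antitone j false hb)
    rw [map_mul, map_mul,
      show (a₀ * b₀)⁻¹ * (a₁ * b₁) = b₀⁻¹ * (a₀⁻¹ * a₁) * b₀⁻¹⁻¹ * (b₀⁻¹ * b₁) by group]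
    exact mul_mem (conj_mem_hkCubes_shift hGf hb₀ iha) ihb
  | inv a ha iha =>
    set a₀ := faceRestrHom G j false a
    set a₁ := faceRestrHom G j true a
    have ha₀ : a₀ ∈ hkCubes Gf n := faceRestrHom_mem_hkCubes hGf.antitone j false ha
    rw [map_inv, map_inv, show a₀⁻¹⁻¹ * a₁⁻¹ = a₀ * (a₀⁻¹ * a₁)⁻¹ * a₀⁻¹ by group]
    exact conj_mem_hkCubes_shift hGf ha₀ (inv_mem iha)

lemma apply_top_mem_of_forall_ne_top_eq_one (hGf : IsGrpPrefiltration Gf)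
    {r : (Fin n → Bool) → G} (hr : r ∈ hkCubes Gf n)
    (hone : ∀ v, v ≠ (fun _ => true) → r v = 1) : r (fun _ => true) ∈ Gf n := by
  induction n generalizing Gf with
  | zero => exact apply_mem_of_mem_hkCubes hGf.antitone hr _
  | succ n ih =>
    have hlower : faceRestrHom G 0 false r = 1 :=
      funext fun w => hone _ fun h => by simpa using congrFun h 0
    have hupper := faceRestrHom_inv_mul_mem_hkCubes_shift hGf 0 hr
    rw [hlower, inv_one, one_mul] at hupper
    have htop : faceRestrHom G 0 true r (fun _ => true) = r (fun _ => true) :=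
      congrArg r (Fin.insertNth_self_removeNth 0 fun _ => true)
    rw [← htop]
    exact ih hGf.shift hupper fun w hw => hone _ fun h =>
      hw (funext fun k => by simpa using congrFun h k.succ)

lemma apply_top_eq_of_forall_ne_top (hGf : IsGrpPrefiltration Gf) (hbot : Gf n = ⊥)
    {q q' : (Fin n → Bool) → G} (hq : q ∈ hkCubes Gf n) (hq' : q' ∈ hkCubes Gf n)
    (heq : ∀ v, v ≠ (fun _ => true) → q v = q' v) : q (fun _ => true) = q' (fun _ => true) := by
  have h := apply_top_mem_of_forall_ne_top_eq_one hGf (mul_mem hq (inv_mem hq')) fun v hv => by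
    simp [heq v hv]
  rw [hbot, Subgroup.mem_bot] at h
  exact mul_inv_eq_one.1 h

end Cubes

theorem stmt4 {G : Type*} [Group G] (Gf : ℕ → Subgroup G) (hGf : IsGrpPrefiltration Gf)
    {d : ℕ} (hdeg : Gf (d + 1) = ⊥) {n : ℕ} (q q' : (Fin n → Bool) → G)
    (hq : q ∈ hkCubes Gf n) (hq' : q' ∈ hkCubes Gf n)
    (hagree : ∀ v : Fin n → Bool, weight v ≤ d → q v = q' v) :
    q = q' := by
  induction n with
  | zero => exact funext fun v => hagree v (by simp [weight])
  | succ n ih =>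
    have hoff : ∀ v, v ≠ (fun _ => true) → q v = q' v := fun v =>
      apply_eq_of_forall_lowerFaceRestr_eq fun j =>
        ih _ _ (faceRestrHom_mem_hkCubes hGf.antitone j false hq)
          (faceRestrHom_mem_hkCubes hGf.antitone j false hq') fun w hw =>
            hagree _ (by simpa [weight_insertNth] using hw)
    funext v
    by_cases hv : v = fun _ => true
    · subst hv
      by_cases hnd : n + 1 ≤ d
      · exact hagree _ (by simpa [weight] using hnd)
      · exact apply_top_eq_of_forall_ne_top hGf
          (le_bot_iff.1 (hdeg ▸ hGf.antitone (by omega))) hq hq' hoff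
    · exact hoff v hv
end

section
/- Let (G, G_•) be a filtered group. A map q: {0,1}^n → G lies in C^n(G_•) if and only if q extends to a polynomial map g ∈ Poly(Z^n, G_•), where Z^n carries the filtration Z^n = (Z^n)_0 = (Z^n)_1, (Z^n)_2 = {0}. -/
open Finset

/-- A (pre)filtration on a group: a decreasing chain of subgroups with
`[G_i, G_j] ⊆ G_{i+j}`. -/
def IsGpFiltration {G : Type*} [Group G] (Gf : ℕ → Subgroup G) : Prop :=
  (∀ i, Gf (i + 1) ≤ Gf i) ∧
  (∀ i j : ℕ, ∀ x ∈ Gf i, ∀ y ∈ Gf j, x⁻¹ * y⁻¹ * x * y ∈ Gf (i + j))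

/-- The lower central series filtration on `ℤ^n`:
`(ℤ^n)_0 = (ℤ^n)_1 = ℤ^n`, `(ℤ^n)_2 = {0}`. -/
def zFilt (n : ℕ) : ℕ → Subgroup (Multiplicative (Fin n → ℤ)) :=
  fun i => if i ≤ 1 then ⊤ else ⊥

/-!
Polynomial maps `ℤⁿ → G` form a group (Leibman), and a face element `a^F` with `F` of
codimension `c` and `a ∈ G_c` extends to the polynomial map `x ↦ a ^ ∏_{i ∈ I} ℓᵢ(x)`, where the
affine functions `ℓᵢ` cut out `F`: a product of `c` affine functions has degree at most `c`, so
its differences of order `> c` vanish. Hence every cube extends.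

Conversely, if a polynomial map `g` is trivial at every vertex of `{0,1}ⁿ` strictly below `v`,
then `g(v)` is an iterated difference of order `weight v`, so `g(v) ∈ G_{weight v}`. Multiplying
by the face element `g(v)⁻¹` on the upper face `{u | v ≤ u}` clears `v` and no vertex outside
that face, so clearing the vertices in increasing order reduces `g|{0,1}ⁿ` to `1` using face
elements only.
-/

lemma IsGpFiltration.antitone {G : Type*} [Group G] {Gf : ℕ → Subgroup G}
    (hGf : IsGpFiltration Gf) : Antitone Gf :=
  antitone_nat_of_succ_le hGf.1

lemma IsLowerSet.insert_of_forall_lt {α : Type*} [PartialOrder α] {s : Set α} (hs : IsLowerSet s)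
    {a : α} (ha : ∀ b < a, b ∈ s) : IsLowerSet (insert a s) := by
  rintro b c hcb (rfl | hb)
  · rcases hcb.lt_or_eq with hlt | rfl
    · exact Or.inr (ha c hlt)
    · exact Or.inl rfl
  · exact Or.inr (hs hcb hb)

namespace HostKraCube

open fwdDiff

section Differences

variable {H G : Type*} [Group H] [Group G]

def iterDiff (l : List H) (g : H → G) : H → G := l.foldr mulDiff g

@[simp] lemma iterDiff_nil (g : H → G) : iterDiff [] g = g := rfl

@[simp] lemma iterDiff_cons (h : H) (l : List H) (g : H → G) :
    iterDiff (h :: l) g = mulDiff h (iterDiff l g) := rfl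

lemma iterDiff_append (l₁ l₂ : List H) (g : H → G) :
    iterDiff (l₁ ++ l₂) g = iterDiff l₁ (iterDiff l₂ g) := List.foldr_append

lemma iterDiff_one (l : List H) : iterDiff l (1 : H → G) = 1 := by
  induction l with
  | nil => rfl
  | cons h l ih => funext x; simp [ih, mulDiff]

lemma iterDiff_of_one_mem (g : H → G) {l : List H} (hl : (1 : H) ∈ l) : iterDiff l g = 1 := by
  induction l with
  | nil => simp at hl
  | cons h l ih =>
    funext x
    rcases List.mem_cons.mp hl with rfl | hl
    · simp [mulDiff]
    · simp [ih hl, mulDiff]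

lemma mulDiff_mul (h : H) (u v : H → G) :
    mulDiff h (u * v) = v⁻¹ * mulDiff h u * v * mulDiff h v := by
  funext x; simp only [mulDiff, Pi.mul_apply, Pi.inv_apply]; group

lemma mulDiff_inv (h : H) (u : H → G) :
    mulDiff h u⁻¹ = (u⁻¹)⁻¹ * (mulDiff h u)⁻¹ * u⁻¹ := by
  funext x; simp only [mulDiff, Pi.mul_apply, Pi.inv_apply]; group

lemma mulDiff_commutator (h : H) (u v : H → G) :
    let c := u⁻¹ * v⁻¹ * u * v
    let du := mulDiff h u
    let dv := mulDiff h v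
    mulDiff h c = c⁻¹ * (du⁻¹ * (u⁻¹ * dv⁻¹ * u * dv) * du) * c *
      (c⁻¹ * (dv * du)⁻¹ * c * (dv * du)) * (du⁻¹ * dv⁻¹ * du * dv) *
      (dv⁻¹ * (du⁻¹ * v⁻¹ * du * v) * dv) := by
  funext x; simp only [mulDiff, Pi.mul_apply, Pi.inv_apply]; group

end Differences

section Leibman

variable {H G : Type*} [Group H] [Group G] (Gf : ℕ → Subgroup G)

def IterDiffMem (i m : ℕ) (u : H → G) : Prop :=
  ∀ l : List H, l.length ≤ m → ∀ x, iterDiff l u x ∈ Gf (l.length + i)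

variable {Gf}

lemma IterDiffMem.mono (hGf : IsGpFiltration Gf) {i j m m' : ℕ} {u : H → G}
    (h : IterDiffMem Gf i m u) (hji : j ≤ i) (hm : m' ≤ m) : IterDiffMem Gf j m' u :=
  fun l hl x => hGf.antitone (by omega) (h l (hl.trans hm) x)

lemma IterDiffMem.apply_mem {i m : ℕ} {u : H → G} (h : IterDiffMem Gf i m u) (x : H) :
    u x ∈ Gf i := by
  simpa using h [] (Nat.zero_le m) x

lemma iterDiffMem_zero_iff {i : ℕ} {u : H → G} :
    IterDiffMem Gf i 0 u ↔ ∀ x, u x ∈ Gf i := by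
  refine ⟨IterDiffMem.apply_mem, fun h l hl x => ?_⟩
  rw [List.length_eq_zero_iff.mp (Nat.le_zero.mp hl)]
  simpa using h x

lemma iterDiffMem_succ_iff {i m : ℕ} {u : H → G} :
    IterDiffMem Gf i (m + 1) u ↔
      (∀ x, u x ∈ Gf i) ∧ ∀ h, IterDiffMem Gf (i + 1) m (mulDiff h u) := by
  constructor
  · refine fun hu => ⟨hu.apply_mem, fun h l hl x => ?_⟩
    have := hu (l ++ [h]) (by simpa using hl) x
    rw [iterDiff_append, iterDiff_cons, iterDiff_nil] at this
    convert this using 2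
    simp only [List.length_append, List.length_singleton]
    omega
  · rintro ⟨h0, hd⟩ l hl x
    rcases List.eq_nil_or_concat' l with rfl | ⟨l, h, rfl⟩
    · simpa using h0 x
    · rw [iterDiff_append, iterDiff_cons, iterDiff_nil]
      simp only [List.length_append, List.length_singleton] at hl ⊢
      convert hd h l (by omega) x using 2
      omega

lemma IterDiffMem.mulDiff {i m : ℕ} {u : H → G} (hu : IterDiffMem Gf i (m + 1) u) (h : H) :
    IterDiffMem Gf (i + 1) m (mulDiff h u) :=
  (iterDiffMem_succ_iff.mp hu).2 h

variable (Gf) in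
/-- Leibman's theorem at truncation order `m`. The commutator clause is what makes the induction
on `m` go through. -/
structure LeibmanClosed (m : ℕ) : Prop where
  mul : ∀ {i} {u v : H → G}, IterDiffMem Gf i m u → IterDiffMem Gf i m v →
    IterDiffMem Gf i m (u * v)
  inv : ∀ {i} {u : H → G}, IterDiffMem Gf i m u → IterDiffMem Gf i m u⁻¹
  commutator : ∀ {i j} {u v : H → G}, IterDiffMem Gf i m u → IterDiffMem Gf j m v →
    IterDiffMem Gf (i + j) m (u⁻¹ * v⁻¹ * u * v)

lemma leibmanClosed_zero (hGf : IsGpFiltration Gf) : LeibmanClosed (H := H) Gf 0 where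
  mul hu hv := iterDiffMem_zero_iff.mpr fun x => mul_mem (hu.apply_mem x) (hv.apply_mem x)
  inv hu := iterDiffMem_zero_iff.mpr fun x => inv_mem (hu.apply_mem x)
  commutator hu hv :=
    iterDiffMem_zero_iff.mpr fun x => hGf.2 _ _ _ (hu.apply_mem x) _ (hv.apply_mem x)

namespace LeibmanClosed

variable {m : ℕ} (hL : LeibmanClosed (H := H) Gf m)
include hL

lemma conj {k : ℕ} {a g : H → G} (ha : IterDiffMem Gf k m a) (hg : IterDiffMem Gf 0 m g) :
    IterDiffMem Gf k m (g⁻¹ * a * g) := by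
  rw [show g⁻¹ * a * g = a * (a⁻¹ * g⁻¹ * a * g) by group]
  exact hL.mul ha (hL.commutator ha hg)

lemma mul_succ (hGf : IsGpFiltration Gf) {i : ℕ} {u v : H → G}
    (hu : IterDiffMem Gf i (m + 1) u) (hv : IterDiffMem Gf i (m + 1) v) :
    IterDiffMem Gf i (m + 1) (u * v) := by
  refine iterDiffMem_succ_iff.mpr
    ⟨fun x => mul_mem (hu.apply_mem x) (hv.apply_mem x), fun h => ?_⟩
  rw [mulDiff_mul]
  exact hL.mul (hL.conj (hu.mulDiff h) (hv.mono hGf (Nat.zero_le i) m.le_succ)) (hv.mulDiff h)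

lemma inv_succ (hGf : IsGpFiltration Gf) {i : ℕ} {u : H → G}
    (hu : IterDiffMem Gf i (m + 1) u) : IterDiffMem Gf i (m + 1) u⁻¹ := by
  refine iterDiffMem_succ_iff.mpr ⟨fun x => inv_mem (hu.apply_mem x), fun h => ?_⟩
  rw [mulDiff_inv]
  exact hL.conj (hL.inv (hu.mulDiff h)) (hL.inv (hu.mono hGf (Nat.zero_le i) m.le_succ))

lemma commutator_succ (hGf : IsGpFiltration Gf) {i j : ℕ} {u v : H → G}
    (hu : IterDiffMem Gf i (m + 1) u) (hv : IterDiffMem Gf j (m + 1) v) :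
    IterDiffMem Gf (i + j) (m + 1) (u⁻¹ * v⁻¹ * u * v) := by
  refine iterDiffMem_succ_iff.mpr
    ⟨fun x => hGf.2 _ _ _ (hu.apply_mem x) _ (hv.apply_mem x), fun h => ?_⟩
  have hu' := hu.mono hGf le_rfl m.le_succ
  have hv' := hv.mono hGf le_rfl m.le_succ
  have hdu := hu.mulDiff h
  have hdv := hv.mulDiff h
  have hc := hL.commutator hu' hv'
  have hc₀ := hc.mono hGf (Nat.zero_le _) le_rfl
  have hdu₀ := hdu.mono hGf (Nat.zero_le _) le_rfl
  have hdv₀ := hdv.mono hGf (Nat.zero_le _) le_rfl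
  have hX := hL.conj (hL.conj (hL.commutator hu' hdv) hdu₀) hc₀
  have hY := hL.commutator hc (hL.mul (hdv.mono hGf (j := 1) (by omega) le_rfl)
    (hdu.mono hGf (by omega) le_rfl))
  have hZ := (hL.commutator hdu hdv).mono hGf (j := i + j + 1) (by omega) le_rfl
  have hW := (hL.conj (hL.commutator hdu hv') hdv₀).mono hGf (j := i + j + 1) (by omega) le_rfl
  rw [mulDiff_commutator]
  exact hL.mul (hL.mul (hL.mul hX hY) hZ) hW

lemma succ (hGf : IsGpFiltration Gf) : LeibmanClosed (H := H) Gf (m + 1) where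
  mul := hL.mul_succ hGf
  inv := hL.inv_succ hGf
  commutator := hL.commutator_succ hGf

end LeibmanClosed

lemma leibmanClosed (hGf : IsGpFiltration Gf) (m : ℕ) : LeibmanClosed (H := H) Gf m := by
  induction m with
  | zero => exact leibmanClosed_zero hGf
  | succ m ih => exact ih.succ hGf

variable (H) in
/-- `Poly(H, G_•)` for the filtration `H = H₀ = H₁ ⊇ H₂ = 1` on `H`. -/
def polyMaps (hGf : IsGpFiltration Gf) : Subgroup (H → G) where
  carrier := {u | ∀ m, IterDiffMem Gf 0 m u}
  mul_mem' hu hv m := (leibmanClosed hGf m).mul (hu m) (hv m)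
  one_mem' m l _ x := by simp [iterDiff_one]
  inv_mem' hu m := (leibmanClosed hGf m).inv (hu m)

end Leibman

section Degree

variable {A : Type*} [AddCommGroup A]

/-- `deg P < k`. -/
def IsDegLT : ℕ → (A → ℤ) → Prop
  | 0, P => P = 0
  | k + 1, P => ∀ h, IsDegLT k (Δ_[h] P)

lemma fwdDiff_zero (h : A) : Δ_[h] (0 : A → ℤ) = 0 := fwdDiff_const h 0

lemma foldr_fwdDiff_zero (l : List A) : l.foldr fwdDiff (0 : A → ℤ) = 0 := by
  induction l with
  | nil => rfl
  | cons h l ih => rw [List.foldr_cons, ih, fwdDiff_zero]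

lemma IsDegLT.foldr_fwdDiff_eq_zero {k : ℕ} {P : A → ℤ} (hP : IsDegLT k P) {l : List A}
    (hl : k ≤ l.length) : l.foldr fwdDiff P = 0 := by
  induction k generalizing l P with
  | zero => rw [show P = 0 from hP, foldr_fwdDiff_zero]
  | succ k ih =>
    rcases List.eq_nil_or_concat' l with rfl | ⟨l, h, rfl⟩
    · simp at hl
    · rw [List.foldr_append, List.foldr_cons, List.foldr_nil]
      exact ih (hP h) (by simpa using hl)

lemma IsDegLT.succ {k : ℕ} {P : A → ℤ} (hP : IsDegLT k P) : IsDegLT (k + 1) P := by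
  induction k generalizing P with
  | zero => intro h; rw [show P = 0 from hP]; exact fwdDiff_zero h
  | succ k ih => exact fun h => ih (hP h)

lemma IsDegLT.add {k : ℕ} {P Q : A → ℤ} (hP : IsDegLT k P) (hQ : IsDegLT k Q) :
    IsDegLT k (P + Q) := by
  induction k generalizing P Q with
  | zero => rw [show P = 0 from hP, show Q = 0 from hQ, add_zero]; rfl
  | succ k ih => intro h; rw [fwdDiff_add]; exact ih (hP h) (hQ h)

lemma IsDegLT.const_smul {k : ℕ} {P : A → ℤ} (hP : IsDegLT k P) (c : ℤ) :
    IsDegLT k (c • P) := by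
  induction k generalizing P with
  | zero => rw [show P = 0 from hP, smul_zero]; rfl
  | succ k ih => intro h; rw [fwdDiff_const_smul]; exact ih (hP h)

def IsAffine (ℓ : A → ℤ) : Prop := ∀ h, ∃ c : ℤ, Δ_[h] ℓ = fun _ => c

lemma IsDegLT.affine_mul {k : ℕ} {ℓ P : A → ℤ} (hℓ : IsAffine ℓ) (hP : IsDegLT k P) :
    IsDegLT (k + 1) (ℓ * P) := by
  induction k generalizing P with
  | zero => rw [show P = 0 from hP, mul_zero]; exact IsDegLT.succ rfl
  | succ k ih =>
    intro h
    obtain ⟨c, hc⟩ := hℓ h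
    have hprod : Δ_[h] (ℓ * P) = c • P + ℓ * Δ_[h] P + c • Δ_[h] P := by
      have := fwdDiff_smul (h := h) ℓ P
      rw [hc] at this
      exact this
    rw [hprod]
    exact ((hP.const_smul c).add (ih (hP h))).add ((hP h).const_smul c).succ

lemma isDegLT_prod {ι : Type*} (I : Finset ι) {ℓ : ι → A → ℤ}
    (hℓ : ∀ i ∈ I, IsAffine (ℓ i)) :
    IsDegLT (I.card + 1) (∏ i ∈ I, ℓ i) := by
  classical
  induction I using Finset.induction_on with
  | empty => exact fun h => fwdDiff_const h (1 : ℤ)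
  | insert a I ha ih =>
    rw [Finset.prod_insert ha, Finset.card_insert_of_notMem ha]
    exact (ih fun i hi => hℓ i (Finset.mem_insert_of_mem hi)).affine_mul
      (hℓ a (Finset.mem_insert_self a I))

end Degree

section PowerMaps

variable {A G : Type*} [AddCommGroup A] [Group G]

lemma iterDiff_zpow (a : G) (P : A → ℤ) (l : List (Multiplicative A)) :
    iterDiff l (fun x => a ^ P x.toAdd) =
      fun x => a ^ (l.map Multiplicative.toAdd).foldr fwdDiff P x.toAdd := by
  induction l with
  | nil => rfl
  | cons h l ih =>
    funext x
    rw [iterDiff_cons, ih, mulDiff, ← zpow_neg, ← zpow_add]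
    simp only [List.map_cons, List.foldr_cons, fwdDiff, toAdd_mul]
    ring_nf

lemma zpow_mem_polyMaps {Gf : ℕ → Subgroup G} (hGf : IsGpFiltration Gf) {k : ℕ} {a : G}
    (ha : a ∈ Gf k) {P : A → ℤ} (hP : IsDegLT (k + 1) P) :
    (fun x : Multiplicative A => a ^ P x.toAdd) ∈ polyMaps (Multiplicative A) hGf := by
  intro m l _ x
  rw [iterDiff_zpow, add_zero]
  dsimp only
  by_cases hl : l.length ≤ k
  · exact hGf.antitone hl (zpow_mem ha _)
  · rw [hP.foldr_fwdDiff_eq_zero (by simp; omega), Pi.zero_apply, zpow_zero]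
    exact one_mem _

end PowerMaps

section Cube

variable {G : Type*} [Group G] {Gf : ℕ → Subgroup G} {n : ℕ}

variable (G n) in
def cubeRestrict : (Multiplicative (Fin n → ℤ) → G) →* ((Fin n → Bool) → G) where
  toFun g v := g (Multiplicative.ofAdd (cubeEmb v))
  map_one' := rfl
  map_mul' _ _ := rfl

@[simp] lemma cubeRestrict_apply (g : Multiplicative (Fin n → ℤ) → G) (v : Fin n → Bool) :
    cubeRestrict G n g v = g (Multiplicative.ofAdd (cubeEmb v)) := rfl

def faceCoord (x : Fin n → Bool) (i : Fin n) (t : Fin n → ℤ) : ℤ :=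
  if x i then t i else 1 - t i

lemma isAffine_faceCoord (x : Fin n → Bool) (i : Fin n) : IsAffine (faceCoord x i) := by
  intro h
  refine ⟨if x i then h i else -h i, funext fun t => ?_⟩
  by_cases hx : x i <;> simp [faceCoord, fwdDiff, hx]

lemma faceCoord_cubeEmb (x v : Fin n → Bool) (i : Fin n) :
    faceCoord x i (cubeEmb v) = if v i = x i then 1 else 0 := by
  cases hx : x i <;> cases hv : v i <;> simp [faceCoord, cubeEmb, hx, hv]

lemma faceEl_mem_map_polyMaps (hGf : IsGpFiltration Gf) {c : ℕ} {F : Set (Fin n → Bool)}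
    (hF : IsFaceOfCodim F c) {a : G} (ha : a ∈ Gf c) :
    faceEl F a ∈ (polyMaps _ hGf).map (cubeRestrict G n) := by
  obtain ⟨I, x, rfl, rfl⟩ := hF
  refine ⟨fun t => a ^ (∏ i ∈ I, faceCoord x i) t.toAdd,
    zpow_mem_polyMaps hGf ha (isDegLT_prod I fun i _ => isAffine_faceCoord x i),
    funext fun v => ?_⟩
  classical
  simp only [cubeRestrict_apply, toAdd_ofAdd, Finset.prod_apply, faceCoord_cubeEmb,
    Finset.prod_boole, faceEl, Set.mem_ofPred_eq]
  split_ifs <;> simp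

lemma hkCubes_le_map_polyMaps (hGf : IsGpFiltration Gf) :
    hkCubes Gf n ≤ (polyMaps _ hGf).map (cubeRestrict G n) :=
  (Subgroup.closure_le _).2 fun _ ⟨_, _, _, hF, ha, he⟩ =>
    he ▸ faceEl_mem_map_polyMaps hGf hF ha

lemma isPolyMap_zFilt_iff (hGf : IsGpFiltration Gf) (g : Multiplicative (Fin n → ℤ) → G) :
    IsPolyMap (zFilt n) Gf g ↔ g ∈ polyMaps _ hGf := by
  constructor
  · intro hg m l _ x
    simpa [iterDiff, List.ofFn_get] using
      hg l.length (fun _ => 1) l.get (fun _ => by simp [zFilt]) x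
  · intro hg m d h hh x
    change iterDiff (List.ofFn h) g x ∈ _
    by_cases hd : ∀ j, d j ≤ 1
    · have hsum : ∑ j, d j ≤ m := by
        simpa using Finset.sum_le_sum fun j (_ : j ∈ Finset.univ) => hd j
      have := hg m (List.ofFn h) (by simp) x
      rw [List.length_ofFn, add_zero] at this
      exact hGf.antitone hsum this
    · obtain ⟨j, hj⟩ := not_forall.mp hd
      have hj1 : h j = 1 := by simpa [zFilt, show ¬ d j ≤ 1 from hj] using hh j
      rw [iterDiff_of_one_mem g (hj1 ▸ List.mem_ofFn.mpr ⟨j, rfl⟩)]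
      exact one_mem _

lemma apply_prod_mem_of_forall_ssubset {H ι : Type*} [CommGroup H] (e : ι → H) (S : Finset ι)
    {i : ℕ} {g : H → G} (hg : ∀ m, IterDiffMem Gf i m g)
    (h1 : ∀ T ⊂ S, g (∏ j ∈ T, e j) = 1) : g (∏ j ∈ S, e j) ∈ Gf (S.card + i) := by
  classical
  induction S using Finset.induction_on generalizing i g with
  | empty => simpa using (hg 0).apply_mem 1
  | insert a S ha ih =>
    have hdiff : ∀ T ⊆ S, g (∏ j ∈ insert a T, e j) =
        g (∏ j ∈ T, e j) * mulDiff (e a) g (∏ j ∈ T, e j) := by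
      intro T hT
      rw [mulDiff, mul_inv_cancel_left, Finset.prod_insert (fun h => ha (hT h)), mul_comm]
    have key := ih (g := mulDiff (e a) g) (fun m => (hg (m + 1)).mulDiff (e a)) fun T hT => by
      have hins : insert a T ⊂ insert a S := Finset.ssubset_iff_subset_ne.mpr
        ⟨Finset.insert_subset_insert a hT.subset, fun h => hT.ne (by
          rw [← Finset.erase_insert (fun h => ha (hT.subset h)), h, Finset.erase_insert ha])⟩
      have := hdiff T hT.subset
      rwa [h1 _ hins, h1 T (hT.trans (Finset.ssubset_insert ha)), one_mul, eq_comm] at this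
    rw [hdiff S subset_rfl, h1 S (Finset.ssubset_insert ha), one_mul,
      Finset.card_insert_of_notMem ha]
    convert key using 2
    omega

lemma ofAdd_cubeEmb (v : Fin n → Bool) :
    Multiplicative.ofAdd (cubeEmb v) =
      ∏ j with v j = true, Multiplicative.ofAdd (Pi.single j (1 : ℤ)) := by
  rw [← ofAdd_sum]
  congr 1
  funext i
  by_cases hv : v i <;> simp [cubeEmb, Finset.sum_apply, Pi.single_apply, hv]

lemma apply_cubeEmb_mem (hGf : IsGpFiltration Gf) {g : Multiplicative (Fin n → ℤ) → G}
    (hg : g ∈ polyMaps _ hGf) {v : Fin n → Bool}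
    (hv : ∀ u < v, g (Multiplicative.ofAdd (cubeEmb u)) = 1) :
    g (Multiplicative.ofAdd (cubeEmb v)) ∈ Gf (weight v) := by
  rw [ofAdd_cubeEmb, weight, ← add_zero (Finset.card _)]
  refine apply_prod_mem_of_forall_ssubset _ _ hg fun T hT => ?_
  have hTv : (fun j => decide (j ∈ T)) < v := by
    refine lt_of_le_of_ne (fun j => Bool.le_iff_imp.mpr fun hj => ?_) fun h => hT.ne ?_
    · simpa using hT.subset (by simpa using hj)
    · ext j; simp [← h]
  simpa [ofAdd_cubeEmb] using hv _ hTv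

lemma isFaceOfCodim_Ici (v : Fin n → Bool) : IsFaceOfCodim (Set.Ici v) (weight v) := by
  refine ⟨_, fun _ => true, rfl, Set.ext fun u => ?_⟩
  simp [Pi.le_def, Bool.le_iff_imp]

lemma mem_hkCubes_of_eqOn_lowerSet (hGf : IsGpFiltration Gf) (D : Finset (Fin n → Bool))
    (hD : IsLowerSet (D : Set (Fin n → Bool))) {q : (Fin n → Bool) → G}
    (hq : q ∈ (polyMaps _ hGf).map (cubeRestrict G n)) (h1 : ∀ u ∈ D, q u = 1) :
    q ∈ hkCubes Gf n := by
  classical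
  induction D using WellFoundedGT.induction generalizing q with
  | _ D ih =>
    by_cases hfull : ∀ v, v ∈ D
    · rw [show q = 1 from funext fun v => h1 v (hfull v)]
      exact one_mem _
    obtain ⟨v, hvD, hvmin⟩ := exists_minimal_of_wellFoundedLT (· ∉ D) (not_forall.mp hfull)
    have hlt : ∀ u < v, u ∈ D := fun u huv => by_contra fun hu => (hvmin hu huv.le).not_gt huv
    obtain ⟨g, hg, rfl⟩ := hq
    set f := faceEl (Set.Ici v) (g (Multiplicative.ofAdd (cubeEmb v)))⁻¹
    have hf : f ∈ hkCubes Gf n := Subgroup.subset_closure ⟨_, _, _, isFaceOfCodim_Ici v,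
      inv_mem (apply_cubeEmb_mem hGf hg fun u hu => h1 u (hlt u hu)), rfl⟩
    have hD' : IsLowerSet ((insert v D : Finset _) : Set (Fin n → Bool)) := by
      rw [Finset.coe_insert]
      exact hD.insert_of_forall_lt hlt
    have hmul := ih (insert v D) (Finset.ssubset_insert hvD) hD'
      (mul_mem ⟨g, hg, rfl⟩ (hkCubes_le_map_polyMaps hGf hf)) fun u hu => by
        rcases Finset.mem_insert.mp hu with rfl | hu
        · simp [f, faceEl]
        · have hvu : ¬ v ≤ u := fun hvu => hvD (hD hvu hu)
          simp [f, faceEl, hvu, h1 u hu]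
    simpa using mul_mem hmul (inv_mem hf)

lemma hkCubes_eq_map_polyMaps (hGf : IsGpFiltration Gf) :
    hkCubes Gf n = (polyMaps _ hGf).map (cubeRestrict G n) :=
  le_antisymm (hkCubes_le_map_polyMaps hGf) fun _ hq =>
    mem_hkCubes_of_eqOn_lowerSet hGf ∅ (by simpa using isLowerSet_empty) hq (by simp)

end Cube

end HostKraCube

open HostKraCube in
theorem stmt9 {G : Type*} [Group G] (Gf : ℕ → Subgroup G) (hGf : IsGpFiltration Gf)
    {n : ℕ} (q : (Fin n → Bool) → G) :
    q ∈ hkCubes Gf n ↔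
      ∃ g : Multiplicative (Fin n → ℤ) → G, IsPolyMap (zFilt n) Gf g ∧
        ∀ v : Fin n → Bool, q v = g (Multiplicative.ofAdd (cubeEmb v)) := by
  rw [hkCubes_eq_map_polyMaps hGf, Subgroup.mem_map]
  simp only [isPolyMap_zFilt_iff hGf, funext_iff, cubeRestrict_apply, eq_comm]
end
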